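/- arXiv:2107.14294 — 2 statements merged into one kernel-verified Lean document; each statement's English description precedes it below -/
import Mathlib

section
/- Let $f: \mathbb{R} \to \mathbb{R}$ be measurable with $\|f\|_a := \int_{\mathbb{R}} |f(x)|(1+|x|^a)\,dx < \infty$, where $a, c, \sigma > 0$. Then there is a constant $C$ (depending only on $a,c$) such that $\int_{\mathbb{R}^2} |f(x)| (1 \wedge |x\eta|)^a |\eta|^c e^{-\sigma^2 \eta^2} \, d\eta \, dx \le \frac{C}{\sigma^{1+c}(1 \vee \sigma)^a} \|f\|_a$. -/
/-!
Since `(1 ∧ |xη|) (1 ∨ σ) ≤ 1 ∨ |x| |ση|`, the integrand is bounded by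
`(1 ∨ σ)^{-a} |f(x)| (1 + |x|^a) · (1 + |ση|^a) |η|^c e^{-σ²η²}`, which splits into a product.
The `η`-factor is a rescaling of its value at `σ = 1`: its integral is `σ^{-(1+c)}` times a
finite constant depending only on `a` and `c`.
-/

open MeasureTheory Real Set

lemma integrable_abs_rpow_mul_exp_neg_mul_sq {b : ℝ} (hb : 0 < b) {s : ℝ} (hs : -1 < s) :
    Integrable fun x : ℝ => |x| ^ s * exp (-b * x ^ 2) := by
  rw [← integrableOn_univ, ← @Iio_union_Ici _ _ (0 : ℝ), integrableOn_union,
    integrableOn_Ici_iff_integrableOn_Ioi]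
  have hIoi : IntegrableOn (fun x : ℝ => |x| ^ s * exp (-b * x ^ 2)) (Ioi 0) :=
    (integrableOn_rpow_mul_exp_neg_mul_sq hb hs).congr_fun
      (fun x hx => by rw [abs_of_pos (mem_Ioi.mp hx)]) measurableSet_Ioi
  refine ⟨?_, hIoi⟩
  rw [← (Measure.measurePreserving_neg (volume : Measure ℝ)).integrableOn_comp_preimage
      (Homeomorph.neg ℝ).measurableEmbedding]
  simp only [Function.comp_def, neg_sq, neg_preimage, neg_Iio, neg_zero, abs_neg]
  exact hIoi.congr_set_ae (Filter.EventuallyEq.refl _ _)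

lemma max_one_rpow_le_one_add_rpow {t : ℝ} (ht : 0 ≤ t) (a : ℝ) :
    (max 1 t) ^ a ≤ 1 + t ^ a := by
  rcases le_total 1 t with h | h
  · rw [max_eq_right h]
    linarith
  · rw [max_eq_left h, one_rpow]
    linarith [rpow_nonneg ht a]

lemma min_one_abs_mul_mul_max_one_le {σ : ℝ} (hσ : 0 < σ) (x η : ℝ) :
    min 1 |x * η| * max 1 σ ≤ max 1 (|x| * |σ * η|) := by
  rcases le_total σ 1 with h | h
  · rw [max_eq_left h, mul_one]
    exact (min_le_left _ _).trans (le_max_left _ _)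
  · rw [max_eq_right h]
    calc min 1 |x * η| * σ ≤ |x * η| * σ := mul_le_mul_of_nonneg_right (min_le_right _ _) hσ.le
      _ = |x| * |σ * η| := by rw [abs_mul, abs_mul, abs_of_pos hσ]; ring
      _ ≤ max 1 (|x| * |σ * η|) := le_max_right _ _

lemma min_one_abs_mul_rpow_mul_max_one_rpow_le {a σ : ℝ} (ha : 0 ≤ a) (hσ : 0 < σ) (x η : ℝ) :
    (min 1 |x * η|) ^ a * (max 1 σ) ^ a ≤ (1 + |x| ^ a) * (1 + |σ * η| ^ a) := by
  have hx : 0 ≤ |x| ^ a := by positivity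
  have hση : 0 ≤ |σ * η| ^ a := by positivity
  calc (min 1 |x * η|) ^ a * (max 1 σ) ^ a = (min 1 |x * η| * max 1 σ) ^ a :=
        (mul_rpow (by positivity) (by positivity)).symm
    _ ≤ (max 1 (|x| * |σ * η|)) ^ a :=
        rpow_le_rpow (by positivity) (min_one_abs_mul_mul_max_one_le hσ x η) ha
    _ ≤ 1 + |x| ^ a * |σ * η| ^ a := by
        rw [← mul_rpow (abs_nonneg _) (abs_nonneg _)]
        exact max_one_rpow_le_one_add_rpow (by positivity) a
    _ ≤ (1 + |x| ^ a) * (1 + |σ * η| ^ a) := by nlinarith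

noncomputable def gaussianMomentWeight (a c σ η : ℝ) : ℝ :=
  (1 + |σ * η| ^ a) * |η| ^ c * exp (-(σ ^ 2 * η ^ 2))

section gaussianMomentWeight

variable {a c σ : ℝ}

lemma gaussianMomentWeight_nonneg (a c σ η : ℝ) : 0 ≤ gaussianMomentWeight a c σ η := by
  unfold gaussianMomentWeight
  positivity

lemma gaussianMomentWeight_eq_rescale (hσ : 0 < σ) (η : ℝ) :
    gaussianMomentWeight a c σ η = (σ ^ c)⁻¹ * gaussianMomentWeight a c 1 (σ * η) := by
  have hσc : σ ^ c ≠ 0 := (rpow_pos_of_pos hσ c).ne'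
  simp only [gaussianMomentWeight, one_mul, one_pow, abs_mul σ η, abs_of_pos hσ,
    mul_rpow hσ.le (abs_nonneg η)]
  field_simp

lemma integrable_gaussianMomentWeight_one (hc : -1 < c) (hac : -1 < a + c) :
    Integrable (gaussianMomentWeight a c 1) := by
  refine ((integrable_abs_rpow_mul_exp_neg_mul_sq one_pos hc).add
    (integrable_abs_rpow_mul_exp_neg_mul_sq one_pos hac)).congr ?_
  filter_upwards [volume.ae_ne 0] with u hu
  simp only [Pi.add_apply, gaussianMomentWeight, one_mul, one_pow, neg_mul,
    rpow_add (abs_pos.mpr hu)]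
  ring

lemma integrable_gaussianMomentWeight (hσ : 0 < σ) (hc : -1 < c) (hac : -1 < a + c) :
    Integrable (gaussianMomentWeight a c σ) := by
  simp only [funext (gaussianMomentWeight_eq_rescale (a := a) (c := c) hσ)]
  exact ((integrable_gaussianMomentWeight_one hc hac).comp_mul_left' hσ.ne').const_mul _

lemma integral_gaussianMomentWeight (hσ : 0 < σ) :
    ∫ η, gaussianMomentWeight a c σ η = (σ ^ (1 + c))⁻¹ * ∫ u, gaussianMomentWeight a c 1 u := by
  simp only [gaussianMomentWeight_eq_rescale hσ, integral_const_mul,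
    Measure.integral_comp_mul_left, smul_eq_mul, abs_inv, abs_of_pos hσ, rpow_add hσ, rpow_one]
  ring

lemma mul_min_one_rpow_le_gaussianMomentWeight_mul (ha : 0 ≤ a) (hσ : 0 < σ) (y x η : ℝ) :
    |y| * (min 1 |x * η|) ^ a * |η| ^ c * exp (-(σ ^ 2 * η ^ 2))
      ≤ ((max 1 σ) ^ a)⁻¹ * gaussianMomentWeight a c σ η * (|y| * (1 + |x| ^ a)) := by
  have hmax : 0 < (max 1 σ) ^ a := rpow_pos_of_pos (one_pos.trans_le (le_max_left _ _)) a
  have hmin : (min 1 |x * η|) ^ a ≤ ((max 1 σ) ^ a)⁻¹ * ((1 + |x| ^ a) * (1 + |σ * η| ^ a)) :=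
    (le_inv_mul_iff₀ hmax).mpr <| by
      rw [mul_comm]; exact min_one_abs_mul_rpow_mul_max_one_rpow_le ha hσ x η
  calc |y| * (min 1 |x * η|) ^ a * |η| ^ c * exp (-(σ ^ 2 * η ^ 2))
      = (|y| * |η| ^ c * exp (-(σ ^ 2 * η ^ 2))) * (min 1 |x * η|) ^ a := by ring
    _ ≤ (|y| * |η| ^ c * exp (-(σ ^ 2 * η ^ 2))) *
        (((max 1 σ) ^ a)⁻¹ * ((1 + |x| ^ a) * (1 + |σ * η| ^ a))) := by gcongr
    _ = ((max 1 σ) ^ a)⁻¹ * gaussianMomentWeight a c σ η * (|y| * (1 + |x| ^ a)) := by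
        rw [gaussianMomentWeight]; ring

end gaussianMomentWeight

lemma lintegral_ofReal_mul_prod {α β : Type*} [MeasurableSpace α] [MeasurableSpace β]
    {μ : Measure α} {ν : Measure β} [SFinite μ] [SFinite ν] {f : α → ℝ} {g : β → ℝ}
    (hf : Integrable f μ) (hg : Integrable g ν) (hf0 : 0 ≤ f) (hg0 : 0 ≤ g) :
    ∫⁻ p, ENNReal.ofReal (f p.1 * g p.2) ∂μ.prod ν
      = ENNReal.ofReal ((∫ x, f x ∂μ) * ∫ y, g y ∂ν) := by
  rw [← integral_prod_mul, ofReal_integral_eq_lintegral_ofReal (hf.mul_prod hg)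
    (Filter.Eventually.of_forall fun p => mul_nonneg (hf0 _) (hg0 _))]

/-- For `a, c > 0` there is a constant `C` such that for every `σ > 0` and every
measurable `f` with `‖f‖_a < ∞`,
`∫ |f(x)| (1∧|xη|)^a |η|^c e^{-σ²η²} dη dx ≤ C σ^{-(1+c)} (1∨σ)^{-a} ‖f‖_a`. -/
theorem stmt6 (a c : ℝ) (ha : 0 < a) (hc : 0 < c) :
    ∃ C : ℝ, 0 < C ∧ ∀ σ : ℝ, 0 < σ → ∀ f : ℝ → ℝ, Measurable f →
      Integrable (fun x => |f x| * (1 + |x| ^ a)) →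
      (∫⁻ p : ℝ × ℝ,
        ENNReal.ofReal (|f p.2| * (min 1 |p.2 * p.1|) ^ a * |p.1| ^ c
          * Real.exp (-(σ ^ 2 * p.1 ^ 2))))
      ≤ ENNReal.ofReal (C / (σ ^ (1 + c) * (max 1 σ) ^ a)
          * ∫ x, |f x| * (1 + |x| ^ a)) := by
  set I := ∫ u, gaussianMomentWeight a c 1 u
  have hI : 0 ≤ I := integral_nonneg (gaussianMomentWeight_nonneg a c 1)
  refine ⟨I + 1, by linarith, fun σ hσ f _ hF => ?_⟩
  set W := fun η => ((max 1 σ) ^ a)⁻¹ * gaussianMomentWeight a c σ η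
  have hW : Integrable W :=
    (integrable_gaussianMomentWeight hσ (by linarith) (by linarith)).const_mul _
  calc _ ≤ ∫⁻ p : ℝ × ℝ, ENNReal.ofReal (W p.1 * (|f p.2| * (1 + |p.2| ^ a))) :=
        lintegral_mono fun p => ENNReal.ofReal_le_ofReal
          (mul_min_one_rpow_le_gaussianMomentWeight_mul ha.le hσ (f p.2) p.2 p.1)
    _ = ENNReal.ofReal ((∫ η, W η) * ∫ x, |f x| * (1 + |x| ^ a)) := by
        rw [Measure.volume_eq_prod]
        exact lintegral_ofReal_mul_prod hW hF
          (fun η => mul_nonneg (by positivity) (gaussianMomentWeight_nonneg a c σ η))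
          (fun x => by positivity)
    _ ≤ _ := by
        refine ENNReal.ofReal_le_ofReal (mul_le_mul_of_nonneg_right ?_ (integral_nonneg
          fun x => by positivity))
        rw [integral_const_mul, integral_gaussianMomentWeight hσ, div_eq_mul_inv, mul_inv]
        have : 0 ≤ ((max 1 σ) ^ a)⁻¹ * (σ ^ (1 + c))⁻¹ := by positivity
        nlinarith
end

section
/- Let $H \in (1/2,1)$, $\mathcal{C}_H > 0$, and define $K_H(t,s) := \mathcal{C}_H s^{1/2-H} \int_s^t (u-s)^{H-3/2} u^{H-1/2} \, du$ for $0 < s \le t$, and $\mu_{r, r+s/n} := \int_r^{r+s/n} K_H(r+s/n, \theta)^2 \, d\theta$. Then for all $r > 0$, $s \ge 0$, $n \ge 1$: $\frac{\mathcal{C}_H^2 s^{2H}}{2H (H-1/2)^2} \le n^{2H} \mu_{r, r+s/n} \le \frac{\mathcal{C}_H^2 s^{2H}}{2H (H-1/2)^2} \left(1 + \frac{s}{rn}\right)^{2H-1}$. -/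
/-!
For `r ≤ θ ≤ t` the factor `u ^ (H - 1/2)` in the kernel's integrand lies between
`θ ^ (H - 1/2)` and `t ^ (H - 1/2)`, and
`∫_θ^t (u - θ) ^ (H - 3/2) du = (t - θ) ^ (H - 1/2) / (H - 1/2)`.
Hence `K_H(t, θ)` is squeezed between `C_H (t - θ) ^ (H - 1/2) / (H - 1/2)` and the same
quantity times `(t / r) ^ (H - 1/2)`. Squaring and integrating `(t - θ) ^ (2H - 1)` over `[r, t]`
gives the bounds with `(t - r) ^ (2H) / (2H)`; for `t = r + s/n` the factor `n ^ (2H)` cancels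
the scaling and `t / r = 1 + s / (r n)`.
-/

open MeasureTheory Set

theorem stronglyMeasurable_setIntegral_prodMk_preimage {α β E : Type*} [MeasurableSpace α]
    [MeasurableSpace β] [NormedAddCommGroup E] [NormedSpace ℝ E] {ν : Measure β} [SFinite ν]
    {f : α → β → E} (hf : StronglyMeasurable (Function.uncurry f)) {S : Set (α × β)}
    (hS : MeasurableSet S) : StronglyMeasurable fun a => ∫ b in Prod.mk a ⁻¹' S, f a b ∂ν := by
  convert (hf.indicator hS).integral_prod_right' (ν := ν) using 1
  funext a
  rw [← integral_indicator (measurable_prodMk_left hS)]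
  rfl

theorem measurable_intervalIntegral_of_measurable_uncurry {f : ℝ → ℝ → ℝ}
    (hf : Measurable (Function.uncurry f)) (t : ℝ) : Measurable fun θ => ∫ u in θ..t, f θ u :=
  -- The sections of the two sets below at `θ` are `Ioc θ t` and `Ioc t θ`.
  ((stronglyMeasurable_setIntegral_prodMk_preimage hf.stronglyMeasurable
      ((measurableSet_lt measurable_fst measurable_snd).inter
        (measurableSet_le measurable_snd measurable_const))).measurable).sub
    (stronglyMeasurable_setIntegral_prodMk_preimage hf.stronglyMeasurable
      ((measurableSet_lt measurable_const measurable_snd).inter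
        (measurableSet_le measurable_snd measurable_fst))).measurable

theorem integral_sub_rpow {p : ℝ} (hp : -1 < p) (a b : ℝ) :
    ∫ u in a..b, (u - a) ^ p = (b - a) ^ (p + 1) / (p + 1) := by
  rw [intervalIntegral.integral_comp_sub_right (· ^ p), sub_self, integral_rpow (Or.inl hp),
    Real.zero_rpow (by linarith), sub_zero]

theorem integral_rpow_sub {p : ℝ} (hp : -1 < p) (a b : ℝ) :
    ∫ u in a..b, (b - u) ^ p = (b - a) ^ (p + 1) / (p + 1) := by
  rw [intervalIntegral.integral_comp_sub_left (· ^ p), sub_self, integral_rpow (Or.inl hp),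
    Real.zero_rpow (by linarith), sub_zero]

theorem intervalIntegrable_sub_rpow {p : ℝ} (hp : -1 < p) (a b : ℝ) :
    IntervalIntegrable (fun u => (u - a) ^ p) volume a b := by
  simpa using
    (intervalIntegral.intervalIntegrable_rpow' (a := a - a) (b := b - a) hp).comp_sub_right a

theorem integral_sub_rpow_mul_rpow_mem {p q a b : ℝ} (hp : -1 < p) (hq : 0 ≤ q) (ha : 0 < a)
    (hab : a ≤ b) :
    ∫ u in a..b, (u - a) ^ p * u ^ q ∈
      Icc (a ^ q * ((b - a) ^ (p + 1) / (p + 1))) (b ^ q * ((b - a) ^ (p + 1) / (p + 1))) := by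
  have hint : ∀ c, IntervalIntegrable (fun u => (u - a) ^ p * c) volume a b :=
    fun c => (intervalIntegrable_sub_rpow hp a b).mul_const c
  have hint' : IntervalIntegrable (fun u => (u - a) ^ p * u ^ q) volume a b :=
    (intervalIntegrable_sub_rpow hp a b).mul_continuousOn
      (continuousOn_id.rpow_const fun _ _ => Or.inr hq)
  have hconst : ∀ c, ∫ u in a..b, (u - a) ^ p * c = c * ((b - a) ^ (p + 1) / (p + 1)) := by
    intro c
    rw [intervalIntegral.integral_mul_const, integral_sub_rpow hp, mul_comm]
  constructor
  · rw [← hconst]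
    refine intervalIntegral.integral_mono_on hab (hint _) hint' fun u hu => ?_
    gcongr
    · exact Real.rpow_nonneg (sub_nonneg.2 hu.1) _
    · exact hu.1
  · rw [← hconst]
    refine intervalIntegral.integral_mono_on hab hint' (hint _) fun u hu => ?_
    gcongr
    · exact Real.rpow_nonneg (sub_nonneg.2 hu.1) _
    · linarith [hu.1]
    · exact hu.2

noncomputable def fbmKernel (H C t s : ℝ) : ℝ :=
  C * s ^ ((1 : ℝ) / 2 - H) * ∫ u in s..t, (u - s) ^ (H - 3 / 2) * u ^ (H - 1 / 2)

theorem measurable_fbmKernel (H C t : ℝ) : Measurable (fbmKernel H C t) := by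
  refine (measurable_const.mul (measurable_id.pow_const _)).mul
    (measurable_intervalIntegral_of_measurable_uncurry ?_ t)
  fun_prop

theorem rpow_mul_fbmIntegral_mem {H θ t : ℝ} (hH : 1 / 2 < H) (hθ : 0 < θ) (hθt : θ ≤ t) :
    θ ^ ((1 : ℝ) / 2 - H) * ∫ u in θ..t, (u - θ) ^ (H - 3 / 2) * u ^ (H - 1 / 2) ∈
      Icc ((t - θ) ^ (H - 1 / 2) / (H - 1 / 2))
        ((t / θ) ^ (H - 1 / 2) * ((t - θ) ^ (H - 1 / 2) / (H - 1 / 2))) := by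
  have hbounds := integral_sub_rpow_mul_rpow_mem (p := H - 3 / 2) (q := H - 1 / 2) (by linarith)
    (by linarith) hθ hθt
  rw [show H - 3 / 2 + 1 = H - 1 / 2 by ring] at hbounds
  have hθ' : 0 < θ ^ ((1 : ℝ) / 2 - H) := Real.rpow_pos_of_pos hθ _
  have hinv : θ ^ ((1 : ℝ) / 2 - H) = (θ ^ (H - 1 / 2))⁻¹ := by
    rw [← Real.rpow_neg hθ.le, neg_sub]
  refine ⟨?_, ?_⟩
  · calc (t - θ) ^ (H - 1 / 2) / (H - 1 / 2)
        = θ ^ ((1 : ℝ) / 2 - H) * (θ ^ (H - 1 / 2) * ((t - θ) ^ (H - 1 / 2) / (H - 1 / 2))) := by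
          rw [hinv, inv_mul_cancel_left₀ (Real.rpow_pos_of_pos hθ _).ne']
      _ ≤ _ := mul_le_mul_of_nonneg_left hbounds.1 hθ'.le
  · calc θ ^ ((1 : ℝ) / 2 - H) * ∫ u in θ..t, (u - θ) ^ (H - 3 / 2) * u ^ (H - 1 / 2)
        ≤ θ ^ ((1 : ℝ) / 2 - H) * (t ^ (H - 1 / 2) * ((t - θ) ^ (H - 1 / 2) / (H - 1 / 2))) :=
          mul_le_mul_of_nonneg_left hbounds.2 hθ'.le
      _ = _ := by
          rw [hinv, Real.div_rpow (hθ.trans_le hθt).le hθ.le]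
          ring

theorem sq_fbmKernel_mem {H C r θ t : ℝ} (hH : 1 / 2 < H) (hr : 0 < r) (hrθ : r ≤ θ)
    (hθt : θ ≤ t) :
    fbmKernel H C t θ ^ 2 ∈ Icc (C ^ 2 / (H - 1 / 2) ^ 2 * (t - θ) ^ (2 * H - 1))
      (C ^ 2 / (H - 1 / 2) ^ 2 * (t / r) ^ (2 * H - 1) * (t - θ) ^ (2 * H - 1)) := by
  have hθ : 0 < θ := hr.trans_le hrθ
  obtain ⟨hlo, hhi⟩ := rpow_mul_fbmIntegral_mem hH hθ hθt
  set J := θ ^ ((1 : ℝ) / 2 - H) * ∫ u in θ..t, (u - θ) ^ (H - 3 / 2) * u ^ (H - 1 / 2)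
  set A := (t - θ) ^ (H - 1 / 2) / (H - 1 / 2)
  have hA : 0 ≤ A := div_nonneg (Real.rpow_nonneg (by linarith) _) (by linarith)
  have hratio : (t / θ) ^ (H - 1 / 2) ≤ (t / r) ^ (H - 1 / 2) :=
    Real.rpow_le_rpow (div_nonneg (by linarith) hθ.le)
      (div_le_div_of_nonneg_left (by linarith) hr hrθ) (by linarith)
  have hsq : ∀ x : ℝ, 0 ≤ x → (x ^ (H - 1 / 2)) ^ 2 = x ^ (2 * H - 1) := fun x hx => by
    rw [← Real.rpow_mul_natCast hx]; ring_nf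
  have hK : fbmKernel H C t θ ^ 2 = C ^ 2 * J ^ 2 := by
    simp only [fbmKernel, J]; ring
  have hA2 : A ^ 2 = (t - θ) ^ (2 * H - 1) / (H - 1 / 2) ^ 2 := by
    rw [div_pow, hsq _ (by linarith)]
  refine ⟨?_, ?_⟩
  · calc C ^ 2 / (H - 1 / 2) ^ 2 * (t - θ) ^ (2 * H - 1) = C ^ 2 * A ^ 2 := by
          rw [hA2]; ring
      _ ≤ _ := by rw [hK]; gcongr
  · calc fbmKernel H C t θ ^ 2 ≤ C ^ 2 * ((t / r) ^ (H - 1 / 2) * A) ^ 2 := by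
          rw [hK]; gcongr
          · exact hA.trans hlo
          · exact hhi.trans (by gcongr)
      _ = _ := by
          rw [mul_pow, hsq _ (div_nonneg (by linarith) hr.le), hA2]; ring

theorem integral_sq_fbmKernel_mem {H C r t : ℝ} (hH : 1 / 2 < H) (hr : 0 < r) (hrt : r ≤ t) :
    ∫ θ in r..t, fbmKernel H C t θ ^ 2 ∈
      Icc (C ^ 2 * (t - r) ^ (2 * H) / (2 * H * (H - 1 / 2) ^ 2))
        (C ^ 2 * (t - r) ^ (2 * H) / (2 * H * (H - 1 / 2) ^ 2) * (t / r) ^ (2 * H - 1)) := by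
  have hbound : ∀ θ ∈ Icc r t, _ := fun θ hθ => sq_fbmKernel_mem (C := C) hH hr hθ.1 hθ.2
  have hpow : IntervalIntegrable (fun θ => (t - θ) ^ (2 * H - 1)) volume r t :=
    (continuous_const.sub continuous_id).rpow_const (fun _ => Or.inr (by linarith))
      |>.intervalIntegrable r t
  -- Without integrability the lower bound would fail, the integral being `0` by convention.
  have hsq : IntervalIntegrable (fun θ => fbmKernel H C t θ ^ 2) volume r t := by
    refine (hpow.const_mul (C ^ 2 / (H - 1 / 2) ^ 2 * (t / r) ^ (2 * H - 1))).mono_fun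
      ((measurable_fbmKernel H C t).pow_const 2).aestronglyMeasurable ?_
    rw [uIoc_of_le hrt]
    filter_upwards [ae_restrict_mem measurableSet_Ioc] with θ hθ
    rw [Real.norm_of_nonneg (sq_nonneg _)]
    exact (hbound θ (Ioc_subset_Icc_self hθ)).2.trans (le_abs_self _)
  have hint : ∀ c,
      ∫ θ in r..t, c * (t - θ) ^ (2 * H - 1) = c * ((t - r) ^ (2 * H) / (2 * H)) := by
    intro c
    rw [intervalIntegral.integral_const_mul, integral_rpow_sub (by linarith),
      show 2 * H - 1 + 1 = 2 * H by ring]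
  constructor
  · calc C ^ 2 * (t - r) ^ (2 * H) / (2 * H * (H - 1 / 2) ^ 2)
        = ∫ θ in r..t, C ^ 2 / (H - 1 / 2) ^ 2 * (t - θ) ^ (2 * H - 1) := by
          rw [hint, div_mul_div_comm, mul_comm ((H - 1 / 2) ^ 2)]
      _ ≤ _ := intervalIntegral.integral_mono_on hrt (hpow.const_mul _) hsq
          fun θ hθ => (hbound θ hθ).1
  · calc ∫ θ in r..t, fbmKernel H C t θ ^ 2
        ≤ ∫ θ in r..t,
            C ^ 2 / (H - 1 / 2) ^ 2 * (t / r) ^ (2 * H - 1) * (t - θ) ^ (2 * H - 1) :=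
          intervalIntegral.integral_mono_on hrt hsq (hpow.const_mul _)
            fun θ hθ => (hbound θ hθ).2
      _ = _ := by rw [hint, mul_right_comm, div_mul_div_comm, mul_comm ((H - 1 / 2) ^ 2)]

theorem stmt9_general (H CH : ℝ) (hH : 1 / 2 < H)
    (K : ℝ → ℝ → ℝ)
    (hK : ∀ s t : ℝ, 0 < s → s ≤ t →
      K t s = CH * s ^ ((1 : ℝ) / 2 - H)
        * ∫ u in s..t, (u - s) ^ (H - 3 / 2) * u ^ (H - 1 / 2)) :
    ∀ (r s : ℝ) (n : ℕ), 0 < r → 0 ≤ s → 1 ≤ n →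
      CH ^ 2 * s ^ (2 * H) / (2 * H * (H - 1 / 2) ^ 2)
          ≤ (n : ℝ) ^ (2 * H)
            * ∫ θ in r..(r + s / (n : ℝ)), (K (r + s / (n : ℝ)) θ) ^ 2 ∧
      (n : ℝ) ^ (2 * H) * ∫ θ in r..(r + s / (n : ℝ)), (K (r + s / (n : ℝ)) θ) ^ 2
          ≤ CH ^ 2 * s ^ (2 * H) / (2 * H * (H - 1 / 2) ^ 2)
            * (1 + s / (r * (n : ℝ))) ^ (2 * H - 1) := by
  intro r s n hr hs hn
  have hn0 : (0 : ℝ) < n := by exact_mod_cast hn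
  set t := r + s / n
  have hrt : r ≤ t := le_add_of_nonneg_right (div_nonneg hs hn0.le)
  have hKt : ∫ θ in r..t, K t θ ^ 2 = ∫ θ in r..t, fbmKernel H CH t θ ^ 2 :=
    intervalIntegral.integral_congr fun θ hθ => by
      rw [uIcc_of_le hrt] at hθ
      simp only [hK θ t (hr.trans_le hθ.1) hθ.2, fbmKernel]
  have hscale : (n : ℝ) ^ (2 * H) * (t - r) ^ (2 * H) = s ^ (2 * H) := by
    rw [← Real.mul_rpow hn0.le (by linarith), add_sub_cancel_left, mul_div_cancel₀ _ hn0.ne']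
  have hratio : t / r = 1 + s / (r * n) := by
    rw [add_div, div_self hr.ne', div_div, mul_comm (n : ℝ)]
  obtain ⟨hlo, hhi⟩ := integral_sq_fbmKernel_mem (C := CH) hH hr hrt
  rw [hKt, ← hratio, ← hscale]
  constructor
  · calc _ = (n : ℝ) ^ (2 * H) * (CH ^ 2 * (t - r) ^ (2 * H) / (2 * H * (H - 1 / 2) ^ 2)) := by
          ring
      _ ≤ _ := by gcongr
  · calc _ ≤ (n : ℝ) ^ (2 * H) * (CH ^ 2 * (t - r) ^ (2 * H) / (2 * H * (H - 1 / 2) ^ 2)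
            * (t / r) ^ (2 * H - 1)) := by gcongr
      _ = _ := by ring

/-- Bounds on `n^{2H} μ_{r, r+s/n}` for the fBm Volterra kernel, `H > 1/2`. -/
theorem stmt9 (H CH : ℝ) (hH : 1 / 2 < H) (hH1 : H < 1) (hCH : 0 < CH)
    (K : ℝ → ℝ → ℝ)
    (hK : ∀ s t : ℝ, 0 < s → s ≤ t →
      K t s = CH * s ^ ((1 : ℝ) / 2 - H)
        * ∫ u in s..t, (u - s) ^ (H - 3 / 2) * u ^ (H - 1 / 2)) :
    ∀ (r s : ℝ) (n : ℕ), 0 < r → 0 ≤ s → 1 ≤ n →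
      CH ^ 2 * s ^ (2 * H) / (2 * H * (H - 1 / 2) ^ 2)
          ≤ (n : ℝ) ^ (2 * H)
            * ∫ θ in r..(r + s / (n : ℝ)), (K (r + s / (n : ℝ)) θ) ^ 2 ∧
      (n : ℝ) ^ (2 * H) * ∫ θ in r..(r + s / (n : ℝ)), (K (r + s / (n : ℝ)) θ) ^ 2
          ≤ CH ^ 2 * s ^ (2 * H) / (2 * H * (H - 1 / 2) ^ 2)
            * (1 + s / (r * (n : ℝ))) ^ (2 * H - 1) :=
  stmt9_general H CH hH K hK
end
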